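/- Let σ > 0, x, μ ∈ ℝ, ρ = exp(-σ²/2), and n a natural number with n > √2/σ. Define g(x; μ, σ) = (1/(2π))·(1 + 2·∑_{k=1}^{∞} ρ^{k²} cos(k(x-μ))) and g_n(x; μ, σ) = (1/(2π))·(1 + 2·∑_{k=1}^{n} ρ^{k²} cos(k(x-μ))). Then |g_n(x; μ, σ) - g(x; μ, σ)| < exp(-n²σ²/2)/(√2·π·σ). -/

import Mathlib

noncomputable def gpdf (x μ σ : ℝ) : ℝ :=
  (1 / (2 * Real.pi)) *
    (1 + 2 * ∑' k : ℕ, Real.exp (-σ^2 / 2) ^ ((k+1)^2) * Real.cos ((k+1) * (x - μ)))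

noncomputable def gpdfTrunc (n : ℕ) (x μ σ : ℝ) : ℝ :=
  (1 / (2 * Real.pi)) *
    (1 + 2 * ∑ k ∈ Finset.Icc 1 n, Real.exp (-σ^2 / 2) ^ (k^2) * Real.cos (k * (x - μ)))

/-!
Bounding `|cos|` by `1` and using `(n + k + 1)² ≥ n² + (2n + 1)(k + 1)`, the tail of the
series after `n` terms is dominated by the geometric series `ρ^{n²} ∑_{k ≥ 1} q^k` with
`q = ρ^{2n+1} = exp (-a)`, `a = (2n + 1)σ²/2`. Its sum is `ρ^{n²} / (exp a - 1) < ρ^{n²} / a`,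
and `a ≥ nσ² > √2 σ` because `nσ > √2`.
-/

open Real Finset

lemma abs_tsum_nat_add_le_of_abs_le_pow_sq {r : ℝ} (hr0 : 0 ≤ r) (hr1 : r < 1) {f : ℕ → ℝ}
    (hf : ∀ k, |f k| ≤ r ^ ((k + 1) ^ 2)) (n : ℕ) :
    |∑' k, f (k + n)| ≤ r ^ (n ^ 2) * (r ^ (2 * n + 1) / (1 - r ^ (2 * n + 1))) := by
  set q := r ^ (2 * n + 1) with hq_def
  have hq1 : q < 1 := pow_lt_one₀ hr0 hr1 (by omega)
  have hgeom : HasSum (fun k ↦ r ^ (n ^ 2) * (q * q ^ k)) (r ^ (n ^ 2) * (q / (1 - q))) := by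
    rw [div_eq_mul_inv]
    exact ((hasSum_geometric_of_lt_one (pow_nonneg hr0 _) hq1).mul_left q).mul_left _
  rw [← Real.norm_eq_abs]
  refine tsum_of_norm_bounded hgeom fun k ↦ ?_
  calc ‖f (k + n)‖ ≤ r ^ ((k + n + 1) ^ 2) := (Real.norm_eq_abs _).trans_le (hf (k + n))
    _ ≤ r ^ (n ^ 2 + (2 * n + 1) * (k + 1)) := by
      refine pow_le_pow_of_le_one hr0 hr1.le ?_
      rw [show (k + n + 1) ^ 2 = n ^ 2 + (2 * n + 1) * (k + 1) + k * (k + 1) by ring]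
      exact Nat.le_add_right _ _
    _ = r ^ (n ^ 2) * (q * q ^ k) := by rw [pow_add, pow_mul, ← pow_succ', hq_def]

lemma exp_neg_div_one_sub_exp_neg_lt {a : ℝ} (ha : 0 < a) :
    exp (-a) / (1 - exp (-a)) < 1 / a := by
  have hexp : a + 1 < exp a := add_one_lt_exp ha.ne'
  rw [exp_neg, div_lt_div_iff₀ (by rw [sub_pos]; exact inv_lt_one_of_one_lt₀ (by linarith)) ha]
  field_simp
  nlinarith

noncomputable def gpdfTerm (x μ σ : ℝ) (k : ℕ) : ℝ :=
  exp (-σ ^ 2 / 2) ^ ((k + 1) ^ 2) * cos ((k + 1) * (x - μ))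

lemma abs_gpdfTerm_le (x μ σ : ℝ) (k : ℕ) :
    |gpdfTerm x μ σ k| ≤ exp (-σ ^ 2 / 2) ^ ((k + 1) ^ 2) := by
  rw [gpdfTerm, abs_mul, abs_of_pos (pow_pos (exp_pos _) _)]
  exact mul_le_of_le_one_right (pow_nonneg (exp_pos _).le _) (abs_cos_le_one _)

lemma exp_neg_sq_div_two_lt_one {σ : ℝ} (hσ : σ ≠ 0) : exp (-σ ^ 2 / 2) < 1 := by
  have : 0 < σ ^ 2 := by positivity
  rw [exp_lt_one_iff]
  linarith

lemma summable_gpdfTerm (x μ : ℝ) {σ : ℝ} (hσ : σ ≠ 0) : Summable (gpdfTerm x μ σ) := by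
  have hr0 := (exp_pos (-σ ^ 2 / 2)).le
  refine .of_norm_bounded (summable_geometric_of_lt_one hr0 (exp_neg_sq_div_two_lt_one hσ))
    fun k ↦ (abs_gpdfTerm_le x μ σ k).trans ?_
  exact pow_le_pow_of_le_one hr0 (exp_neg_sq_div_two_lt_one hσ).le (by nlinarith)

lemma sum_Icc_eq_sum_range_gpdfTerm (n : ℕ) (x μ σ : ℝ) :
    ∑ k ∈ Icc 1 n, exp (-σ ^ 2 / 2) ^ (k ^ 2) * cos (k * (x - μ)) =
      ∑ k ∈ range n, gpdfTerm x μ σ k := by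
  induction n with
  | zero => simp
  | succ n ih =>
    rw [sum_Icc_succ_top (by omega), sum_range_succ, ih, gpdfTerm]
    push_cast
    rfl

lemma gpdfTrunc_sub_gpdf (n : ℕ) (x μ : ℝ) {σ : ℝ} (hσ : σ ≠ 0) :
    gpdfTrunc n x μ σ - gpdf x μ σ = -(∑' k, gpdfTerm x μ σ (k + n)) / π := by
  have hsplit := (summable_gpdfTerm x μ hσ).sum_add_tsum_nat_add n
  rw [gpdfTrunc, gpdf, sum_Icc_eq_sum_range_gpdfTerm]
  change _ - _ * (1 + 2 * ∑' k, gpdfTerm x μ σ k) = _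
  rw [← hsplit]
  field_simp
  ring

theorem gpdf_trunc_error (σ x μ : ℝ) (n : ℕ) (hσ : 0 < σ)
    (hn : (n : ℝ) > Real.sqrt 2 / σ) :
    |gpdfTrunc n x μ σ - gpdf x μ σ| <
      Real.exp (-(n:ℝ)^2 * σ^2 / 2) / (Real.sqrt 2 * Real.pi * σ) := by
  have htail := abs_tsum_nat_add_le_of_abs_le_pow_sq (exp_pos _).le
    (exp_neg_sq_div_two_lt_one hσ.ne') (abs_gpdfTerm_le x μ σ) n
  rw [← exp_nat_mul, ← exp_nat_mul] at htail
  set a : ℝ := (2 * n + 1) * (σ ^ 2 / 2)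
  have ha : ((2 * n + 1 : ℕ) : ℝ) * (-σ ^ 2 / 2) = -a := by push_cast; ring
  have hnσ : √2 < n * σ := by rwa [gt_iff_lt, div_lt_iff₀ hσ] at hn
  have ha_ge : √2 * σ ≤ (2 * n + 1) * (σ ^ 2 / 2) := by
    nlinarith [mul_lt_mul_of_pos_right hnσ hσ, sq_nonneg σ]
  have hratio : exp (-a) / (1 - exp (-a)) < 1 / (√2 * σ) :=
    (exp_neg_div_one_sub_exp_neg_lt (by positivity)).trans_le
      (one_div_le_one_div_of_le (by positivity) ha_ge)
  rw [ha, show ((n ^ 2 : ℕ) : ℝ) * (-σ ^ 2 / 2) = -(n : ℝ) ^ 2 * σ ^ 2 / 2 by push_cast; ring]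
    at htail
  rw [gpdfTrunc_sub_gpdf n x μ hσ.ne', abs_div, abs_neg, abs_of_pos pi_pos]
  calc |∑' k, gpdfTerm x μ σ (k + n)| / π
      < exp (-(n : ℝ) ^ 2 * σ ^ 2 / 2) * (1 / (√2 * σ)) / π := by
        gcongr
        exact htail.trans_lt (mul_lt_mul_of_pos_left hratio (exp_pos _))
    _ = exp (-(n : ℝ) ^ 2 * σ ^ 2 / 2) / (√2 * π * σ) := by field_simp
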